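/- Let n ≥ 1 and let K ⊆ ℝⁿ be a convex body. Then there exists an invertible affine map A : ℝⁿ → ℝⁿ such that A(K) ⊆ Bⁿ and for every unit vector a ∈ ℝⁿ one has h_{A(K)}(a) + h_{A(K)}(−a) ≥ 2/√n, where h_{A(K)}(a) = sup{⟨a,x⟩ : x ∈ A(K)} is the support function of A(K). (In particular, the width-to-circumradius ratio of A(K) satisfies w(A(K))/(2R(A(K))) ≥ 1/√n, so the maximum of w/2R over affine images of K is at least 1/√n.) -/

import Mathlib

/-!
Among the affine maps `x ↦ L x + v` sending `K` into the unit ball, take one maximising `|det L|`;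
it exists because `K` contains a ball, which bounds `L`. If the image had width `2w < 2/√n` in a
unit direction `a`, it would lie in a slab `|⟪a, y⟫ - m| ≤ w` of the ball. Stretching along `a`
by `√(1 + l)` and then shrinking by `√(1 + l w²)` maps that slab back into the ball, with
determinant `√(1 + l) / (1 + l w²)^(n/2)`. Since `(1 + l w²)^n ≤ exp (n l w²)` and `n w² < 1`,
this exceeds `1` for a suitable `l > 0`, contradicting maximality.
-/

open scoped InnerProductSpace
open Metric Set Module

theorem LinearMap.det_id_add_smulRight {R M : Type*} [CommRing R] [AddCommGroup M] [Module R M]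
    [Module.Free R M] [Module.Finite R M] (f : M →ₗ[R] R) (v : M) :
    (LinearMap.id + f.smulRight v).det = 1 + f v := by
  classical
  let b := Module.Free.chooseBasis R M
  have hmat : LinearMap.toMatrix b b (LinearMap.id + f.smulRight v) =
      1 + Matrix.replicateCol Unit (b.repr v) * Matrix.replicateRow Unit (fun i => f (b i)) := by
    ext i j
    simp [LinearMap.toMatrix_apply, Matrix.one_apply, Matrix.mul_apply, Finsupp.single_apply,
      eq_comm, mul_comm]
  have hfv : f v = ∑ i, f (b i) * b.repr v i := by
    conv_lhs => rw [← b.sum_repr v]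
    simp only [map_sum, map_smul, smul_eq_mul, mul_comm]
  rw [← LinearMap.det_toMatrix b, hmat, Matrix.det_one_add_replicateCol_mul_replicateRow, hfv]
  rfl

theorem LinearMap.exists_affineEquiv_coe_eq {𝕜 M : Type*} [Field 𝕜] [AddCommGroup M] [Module 𝕜 M]
    [FiniteDimensional 𝕜 M] (L : M →ₗ[𝕜] M) (hL : L.det ≠ 0) (v : M) :
    ∃ A : M ≃ᵃ[𝕜] M, ⇑A = fun x => L x + v :=
  ⟨(L.equivOfDetNeZero hL).toAffineEquiv.trans (AffineEquiv.constVAdd 𝕜 M v), by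
    ext x; simp [add_comm]⟩

theorem exists_pos_one_add_mul_pow_lt (n : ℕ) {u : ℝ} (hu : 0 ≤ u) (hnu : n * u < 1) :
    ∃ l > 0, (1 + l * u) ^ n < 1 + l := by
  set l := (1 - n * u) / (1 + n * u)
  have hl : 0 < l := by positivity
  have hl1 : (1 + l) * (1 + n * u) = 2 := by
    simp only [l]; field_simp; ring
  have hnx : n * (l * u) < 1 := by nlinarith
  refine ⟨l, hl, ?_⟩
  calc (1 + l * u) ^ n ≤ Real.exp (l * u) ^ n := by
        gcongr; linarith [Real.add_one_le_exp (l * u)]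
    _ = Real.exp (n * (l * u)) := (Real.exp_nat_mul _ _).symm
    _ ≤ 1 / (1 - n * (l * u)) := Real.exp_bound_div_one_sub_of_interval (by positivity) hnx
    _ < 1 + l := by rw [div_lt_iff₀ (by linarith)]; nlinarith

section InnerProductSpace

variable {E : Type*} [NormedAddCommGroup E] [InnerProductSpace ℝ E]

noncomputable def stretchAlong (a : E) (μ : ℝ) : E →L[ℝ] E :=
  ContinuousLinearMap.id ℝ E + (μ - 1) • (innerSL ℝ a).smulRight a

theorem stretchAlong_apply (a : E) (μ : ℝ) (y : E) :
    stretchAlong a μ y = y + ((μ - 1) * ⟪a, y⟫_ℝ) • a := by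
  simp [stretchAlong, smul_smul]

theorem det_stretchAlong [FiniteDimensional ℝ E] {a : E} (ha : ‖a‖ = 1) (μ : ℝ) :
    (stretchAlong a μ).det = μ := by
  have h : (stretchAlong a μ : E →ₗ[ℝ] E) =
      LinearMap.id + ((μ - 1) • innerₛₗ ℝ a).smulRight a := by
    ext y; simp [stretchAlong_apply]
  rw [ContinuousLinearMap.det, h, LinearMap.det_id_add_smulRight]
  simp [ha]

theorem norm_stretchAlong_sub_sq {a : E} (ha : ‖a‖ = 1) (μ β : ℝ) (y : E) :
    ‖stretchAlong a μ y - (μ * β) • a‖ ^ 2 =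
      ‖y‖ ^ 2 - ⟪a, y⟫_ℝ ^ 2 + μ ^ 2 * (⟪a, y⟫_ℝ - β) ^ 2 := by
  rw [stretchAlong_apply, add_sub_assoc, ← sub_smul, norm_add_sq_real, norm_smul,
    real_inner_smul_right, real_inner_comm, ha, Real.norm_eq_abs, mul_one, sq_abs]
  ring

theorem exists_det_gt_one_mapsTo_closedBall_of_slab [FiniteDimensional ℝ E] {a : E}
    (ha : ‖a‖ = 1) {m w : ℝ} (hw : finrank ℝ E * w ^ 2 < 1) :
    ∃ (M : E →L[ℝ] E) (v : E), 1 < M.det ∧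
      ∀ y, ‖y‖ ≤ 1 → |⟪a, y⟫_ℝ - m| ≤ w → ‖M y + v‖ ≤ 1 := by
  obtain ⟨l, hl, hpow⟩ := exists_pos_one_add_mul_pow_lt (finrank ℝ E) (sq_nonneg w) hw
  set μ := √(1 + l)
  set ρ := √(1 + l * w ^ 2)
  -- `β` completes the square: `(1 + l) (t - β)² - t² = l (t - m)² - l m² / (1 + l)`
  set β := l * m / (1 + l)
  have hμ : μ ^ 2 = 1 + l := Real.sq_sqrt (by positivity)
  have hρ : ρ ^ 2 = 1 + l * w ^ 2 := Real.sq_sqrt (by positivity)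
  have hρ0 : 0 < ρ := Real.sqrt_pos.2 (by positivity)
  refine ⟨ρ⁻¹ • stretchAlong a μ, -(ρ⁻¹ * (μ * β)) • a, ?_, fun y hy hslab => ?_⟩
  · rw [ContinuousLinearMap.det, ContinuousLinearMap.toLinearMap_smul, LinearMap.det_smul,
      ← ContinuousLinearMap.det, det_stretchAlong ha, inv_pow, inv_mul_eq_div,
      one_lt_div (by positivity)]
    refine lt_of_pow_lt_pow_left₀ 2 (Real.sqrt_nonneg _) ?_
    rwa [← pow_mul, mul_comm, pow_mul, hρ, hμ]
  · have hsq : ‖stretchAlong a μ y - (μ * β) • a‖ ^ 2 ≤ ρ ^ 2 := by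
      have h1 : (⟪a, y⟫_ℝ - m) ^ 2 ≤ w ^ 2 := sq_le_sq' (abs_le.1 hslab).1 (abs_le.1 hslab).2
      have h2 : ‖y‖ ^ 2 ≤ 1 := pow_le_one₀ (norm_nonneg y) hy
      rw [norm_stretchAlong_sub_sq ha, hμ, hρ]
      have hsquare : ‖y‖ ^ 2 - ⟪a, y⟫_ℝ ^ 2 + (1 + l) * (⟪a, y⟫_ℝ - β) ^ 2 =
          ‖y‖ ^ 2 + l * (⟪a, y⟫_ℝ - m) ^ 2 - l * m ^ 2 / (1 + l) := by
        simp only [β]; field_simp; ring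
      rw [hsquare]
      have hm : 0 ≤ l * m ^ 2 / (1 + l) := by positivity
      nlinarith
    have heq : (ρ⁻¹ • stretchAlong a μ) y + -(ρ⁻¹ * (μ * β)) • a =
        ρ⁻¹ • (stretchAlong a μ y - (μ * β) • a) := by
      simp only [FunLike.coe_smul, Pi.smul_apply]
      module
    rw [heq, norm_smul, Real.norm_eq_abs, abs_inv, abs_of_pos hρ0, inv_mul_le_one₀ hρ0]
    exact (pow_le_pow_iff_left₀ (norm_nonneg _) hρ0.le two_ne_zero).1 hsq

def mapsIntoUnitBall (K : Set E) : Set ((E →L[ℝ] E) × E) :=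
  {p | ∀ x ∈ K, ‖p.1 x + p.2‖ ≤ 1}

theorem isClosed_mapsIntoUnitBall (K : Set E) : IsClosed (mapsIntoUnitBall K) := by
  simp only [mapsIntoUnitBall, ofPred_forall]
  exact isClosed_biInter fun x _ => isClosed_le (by fun_prop) continuous_const

theorem norm_le_of_mem_mapsIntoUnitBall {K : Set E} {c : E} {r : ℝ} (hr : 0 < r)
    (hK : closedBall c r ⊆ K) {p : (E →L[ℝ] E) × E} (hp : p ∈ mapsIntoUnitBall K) :
    ‖p.1‖ ≤ 2 / r := by
  have hc : c ∈ K := hK (mem_closedBall_self hr.le)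
  rw [le_div_iff₀ hr, mul_comm, ← abs_of_pos hr, ← Real.norm_eq_abs, ← norm_smul]
  refine ContinuousLinearMap.opNorm_le_of_unit_norm zero_le_two fun y hy => ?_
  have hcy : c + r • y ∈ K := hK (by simp [norm_smul, hy, abs_of_pos hr])
  calc ‖(r • p.1) y‖ = ‖(p.1 (c + r • y) + p.2) - (p.1 c + p.2)‖ := by simp
    _ ≤ 1 + 1 := norm_sub_le_of_le (hp _ hcy) (hp _ hc)
    _ = 2 := one_add_one_eq_two

theorem isBounded_mapsIntoUnitBall {K : Set E} {c : E} {r : ℝ} (hr : 0 < r)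
    (hK : closedBall c r ⊆ K) : Bornology.IsBounded (mapsIntoUnitBall K) := by
  refine ((isBounded_closedBall (x := 0) (r := 2 / r)).prod
    (isBounded_closedBall (x := 0) (r := 1 + 2 / r * ‖c‖))).subset fun p hp => ?_
  have hL := norm_le_of_mem_mapsIntoUnitBall hr hK hp
  refine ⟨mem_closedBall_zero_iff.2 hL, mem_closedBall_zero_iff.2 ?_⟩
  calc ‖p.2‖ = ‖(p.1 c + p.2) - p.1 c‖ := by simp
    _ ≤ 1 + 2 / r * ‖c‖ :=
      norm_sub_le_of_le (hp c (hK (mem_closedBall_self hr.le))) (p.1.le_of_opNorm_le hL c)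

theorem smul_id_mem_mapsIntoUnitBall {K : Set E} {R : ℝ} (hR : 0 < R) (hK : K ⊆ closedBall 0 R) :
    (R⁻¹ • ContinuousLinearMap.id ℝ E, 0) ∈ mapsIntoUnitBall K := fun x hx => by
  simpa [norm_smul, abs_of_pos hR, inv_mul_le_one₀ hR] using hK hx

theorem exists_isMaxOn_abs_det [FiniteDimensional ℝ E] {K : Set E} (hKb : Bornology.IsBounded K)
    {c : E} {r : ℝ} (hr : 0 < r) (hK : closedBall c r ⊆ K) :
    ∃ p ∈ mapsIntoUnitBall K, 0 < |p.1.det| ∧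
      IsMaxOn (fun q : (E →L[ℝ] E) × E => |q.1.det|) (mapsIntoUnitBall K) p := by
  obtain ⟨R, hR, hKR⟩ := hKb.subset_closedBall_lt 0 0
  have h0 := smul_id_mem_mapsIntoUnitBall (E := E) hR hKR
  have hcompact : IsCompact (mapsIntoUnitBall K) :=
    Metric.isCompact_of_isClosed_isBounded (isClosed_mapsIntoUnitBall K)
      (isBounded_mapsIntoUnitBall hr hK)
  obtain ⟨p, hp, hmax⟩ := hcompact.exists_isMaxOn ⟨_, h0⟩
    (ContinuousLinearMap.continuous_det.comp continuous_fst).abs.continuousOn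
  refine ⟨p, hp, lt_of_lt_of_le ?_ (hmax h0), hmax⟩
  simp [ContinuousLinearMap.det, ContinuousLinearMap.toLinearMap_smul, LinearMap.det_smul, hR.ne']

theorem one_le_finrank_mul_sq_of_isMaxOn [FiniteDimensional ℝ E] {K : Set E}
    {p : (E →L[ℝ] E) × E} (hp : p ∈ mapsIntoUnitBall K) (hp0 : 0 < |p.1.det|)
    (hmax : IsMaxOn (fun q : (E →L[ℝ] E) × E => |q.1.det|) (mapsIntoUnitBall K) p)
    {a : E} (ha : ‖a‖ = 1) {m w : ℝ} (hslab : ∀ x ∈ K, |⟪a, p.1 x + p.2⟫_ℝ - m| ≤ w) :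
    1 ≤ finrank ℝ E * w ^ 2 := by
  by_contra! hw
  obtain ⟨M, v, hM, hMv⟩ := exists_det_gt_one_mapsTo_closedBall_of_slab ha (m := m) hw
  have hq : (M ∘L p.1, M p.2 + v) ∈ mapsIntoUnitBall K := fun x hx => by
    simpa [add_assoc] using hMv _ (hp x hx) (hslab x hx)
  have hdet : |p.1.det| < |(M ∘L p.1).det| := by
    rw [show (M ∘L p.1).det = M.det * p.1.det from LinearMap.det_comp _ _, abs_mul]
    exact lt_mul_of_one_lt_left hp0 (hM.trans_le (le_abs_self _))
  exact (hmax hq).not_gt hdet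

noncomputable def supportFun (S : Set E) (a : E) : ℝ :=
  sSup ((fun x => ⟪a, x⟫_ℝ) '' S)

theorem inner_le_supportFun {S : Set E} (hS : IsCompact S) (a : E) {y : E} (hy : y ∈ S) :
    ⟪a, y⟫_ℝ ≤ supportFun S a :=
  le_csSup ((hS.image (innerSL ℝ a).continuous).bddAbove) (mem_image_of_mem _ hy)

theorem abs_inner_sub_le_supportFun {S : Set E} (hS : IsCompact S) (a : E) {y : E} (hy : y ∈ S) :
    |⟪a, y⟫_ℝ - (supportFun S a - supportFun S (-a)) / 2| ≤
      (supportFun S a + supportFun S (-a)) / 2 := by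
  have h1 := inner_le_supportFun hS a hy
  have h2 := inner_le_supportFun hS (-a) hy
  rw [inner_neg_left] at h2
  rw [abs_le]
  constructor <;> linarith

end InnerProductSpace

theorem stmt19_general (n : ℕ)
    (K : Set (EuclideanSpace ℝ (Fin n)))
    (hKcompact : IsCompact K) (hKint : (interior K).Nonempty) :
    ∃ A : EuclideanSpace ℝ (Fin n) ≃ᵃ[ℝ] EuclideanSpace ℝ (Fin n),
      ⇑A '' K ⊆ Metric.closedBall 0 1 ∧
      ∀ a : EuclideanSpace ℝ (Fin n), ‖a‖ = 1 →
        2 / Real.sqrt n ≤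
          sSup ((fun x => ⟪a, x⟫_ℝ) '' (⇑A '' K)) +
          sSup ((fun x => ⟪-a, x⟫_ℝ) '' (⇑A '' K)) := by
  obtain ⟨c, hc⟩ := hKint
  obtain ⟨r, hr, hball⟩ := nhds_basis_closedBall.mem_iff.1 (mem_interior_iff_mem_nhds.1 hc)
  obtain ⟨p, hp, hp0, hmax⟩ := exists_isMaxOn_abs_det hKcompact.isBounded hr hball
  obtain ⟨A, hA⟩ := LinearMap.exists_affineEquiv_coe_eq _ (abs_pos.1 hp0) p.2
  have hAx x : A x = p.1 x + p.2 := congrFun hA x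
  have hAK : IsCompact (A '' K) := hKcompact.image (by rw [hA]; fun_prop)
  refine ⟨A, fun _ ⟨x, hx, hy⟩ => ?_, fun a ha => ?_⟩
  · simpa [← hy, hAx] using hp x hx
  set m := (supportFun (A '' K) a - supportFun (A '' K) (-a)) / 2
  set w := (supportFun (A '' K) a + supportFun (A '' K) (-a)) / 2 with hw_def
  have hslab x (hx : x ∈ K) : |⟪a, p.1 x + p.2⟫_ℝ - m| ≤ w := by
    rw [← hAx]
    exact abs_inner_sub_le_supportFun hAK a (mem_image_of_mem A hx)
  have hw : 0 ≤ w := (abs_nonneg _).trans (hslab c (interior_subset hc))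
  have hnw : 1 ≤ n * w ^ 2 := by
    simpa [finrank_euclideanSpace_fin] using
      one_le_finrank_mul_sq_of_isMaxOn hp hp0 hmax ha hslab
  have hn : 0 < (n : ℝ) := Nat.cast_pos.2 (Nat.pos_of_ne_zero fun h => by norm_num [h] at hnw)
  have hwn : 1 / √n ≤ w := by
    rw [div_le_iff₀ (Real.sqrt_pos.2 hn)]
    calc 1 ≤ √(n * w ^ 2) := Real.one_le_sqrt.2 hnw
      _ = w * √n := by rw [Real.sqrt_mul hn.le, Real.sqrt_sq hw, mul_comm]
  show 2 / √n ≤ supportFun _ a + supportFun _ (-a)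
  linarith [mul_one_div 2 √n, hw_def]

/-- every convex body has an invertible affine image contained in
the unit ball all of whose widths are at least `2/√n` (so the affine
width-to-circumradius ratio is at least `1/√n`). -/
theorem stmt19 (n : ℕ) (hn : 1 ≤ n)
    (K : Set (EuclideanSpace ℝ (Fin n)))
    (hKcompact : IsCompact K) (hKconv : Convex ℝ K) (hKint : (interior K).Nonempty) :
    ∃ A : EuclideanSpace ℝ (Fin n) ≃ᵃ[ℝ] EuclideanSpace ℝ (Fin n),
      ⇑A '' K ⊆ Metric.closedBall 0 1 ∧
      ∀ a : EuclideanSpace ℝ (Fin n), ‖a‖ = 1 →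
        2 / Real.sqrt n ≤
          sSup ((fun x => ⟪a, x⟫_ℝ) '' (⇑A '' K)) +
          sSup ((fun x => ⟪-a, x⟫_ℝ) '' (⇑A '' K)) :=
  stmt19_general n K hKcompact hKint
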